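/- Let d ≥ 1, z = (z_0,…,z_d) with z_0 = z_d = 1, z_s ≥ 0, P(x) = Σ z_s x^s, and z* the reverse of z. Define L̃_z(x) = (1/2)∫₀ˣ (log P(y)/y - (log y)·P'(y)/P(y)) dy, and similarly L̃_{z*} with P replaced by the reversed polynomial P*. Then for all x > 0: L̃_z(x) + L̃_{z*}(1/x) = L̃_z(∞) = L̃_{z*}(∞), where L̃_z(∞) denotes the limit as x → ∞. -/

import Mathlib

/-!
If `P(x) = xᵈ P*(1/x)`, the logarithmic derivatives satisfy
`P*'(1/x) / P*(1/x) = d x - x² P'(x) / P(x)`, and this turns the integrand `f_{P*}(1/x)`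
of `L̃_{z*}` into `x² f_P(x)`. Hence `x ↦ L̃_z(x) + L̃_{z*}(1/x)` has zero derivative on
`(0, ∞)` and is constant. Because `P(0) = P*(0) = 1` and `P, P* ≥ 1` on `[0, ∞)`, the
integrands are integrable at `0` (`0 ≤ log P(y) / y ≤ (P(y) - 1) / y`, a polynomial), so `L̃`
tends to `0` at `0⁺`; letting `x → ∞` or `x → 0⁺` identifies the constant with both limits
at infinity.
-/

open MeasureTheory Real Polynomial Filter

/-- The Rogers dilogarithm of higher degree associated with a polynomial `P`:
`L̃(x) = (1/2)∫₀ˣ (log P(y)/y - log(y)·P'(y)/P(y)) dy`. -/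
noncomputable def Ltil (P : Polynomial ℝ) (x : ℝ) : ℝ :=
  (1/2) * ∫ y in (0:ℝ)..x,
    (Real.log (P.eval y) / y - Real.log y * P.derivative.eval y / P.eval y)

open Set
open scoped Interval Topology

noncomputable def ltilIntegrand (P : ℝ[X]) (y : ℝ) : ℝ :=
  log (P.eval y) / y - log y * P.derivative.eval y / P.eval y

section Integrand

variable {P : ℝ[X]}

lemma continuousOn_ltilIntegrand (hP : ∀ y, 0 < y → 0 < P.eval y) :
    ContinuousOn (ltilIntegrand P) (Ioi 0) := fun y hy => by
  have hy0 : y ≠ 0 := (mem_Ioi.mp hy).ne'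
  have hPy : P.eval y ≠ 0 := (hP y hy).ne'
  refine ContinuousAt.continuousWithinAt ?_
  exact ((P.continuousAt.log hPy).div continuousAt_id hy0).sub
    (((continuousAt_log hy0).mul P.derivative.continuousAt).div P.continuousAt hPy)

lemma intervalIntegrable_log_eval_div (hP0 : P.eval 0 = 1) (hP : ∀ y, 0 ≤ y → 1 ≤ P.eval y)
    {x : ℝ} (hx : 0 ≤ x) : IntervalIntegrable (fun y => log (P.eval y) / y) volume 0 x := by
  obtain ⟨R, hR⟩ : X ∣ P - 1 := by
    simp [X_dvd_iff, coeff_zero_eq_eval_zero, hP0]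
  refine (R.continuous.abs.intervalIntegrable 0 x).mono_fun'
    ((P.continuous.measurable.log.div measurable_id).aestronglyMeasurable) ?_
  rw [uIoc_of_le hx]
  filter_upwards [ae_restrict_mem measurableSet_Ioc] with y hyx
  have hy : 0 < y := hyx.1
  have hPy := hP y hy.le
  have hRy : P.eval y - 1 = y * R.eval y := by simpa using congrArg (eval y) hR
  rw [norm_div, norm_of_nonneg (log_nonneg hPy), norm_of_nonneg hy.le, div_le_iff₀ hy]
  calc log (P.eval y) ≤ P.eval y - 1 := log_le_sub_one_of_pos (by linarith)
    _ = y * R.eval y := hRy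
    _ ≤ |R.eval y| * y := by
      rw [mul_comm]; exact mul_le_mul_of_nonneg_right (le_abs_self _) hy.le

lemma intervalIntegrable_ltilIntegrand (hP0 : P.eval 0 = 1) (hP : ∀ y, 0 ≤ y → 1 ≤ P.eval y)
    {x : ℝ} (hx : 0 ≤ x) : IntervalIntegrable (ltilIntegrand P) volume 0 x := by
  have hlogDeriv : ContinuousOn (fun y => P.derivative.eval y / P.eval y) [[0, x]] :=
    P.derivative.continuous.continuousOn.div P.continuous.continuousOn fun y hy => by
      have := hP y (by rw [uIcc_of_le hx] at hy; exact hy.1); positivity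
  refine (intervalIntegrable_log_eval_div hP0 hP hx).sub ?_
  simpa only [mul_div_assoc] using
    intervalIntegral.intervalIntegrable_log'.mul_continuousOn hlogDeriv

lemma hasDerivAt_Ltil (hP0 : P.eval 0 = 1) (hP : ∀ y, 0 ≤ y → 1 ≤ P.eval y) {x : ℝ}
    (hx : 0 < x) : HasDerivAt (Ltil P) ((1 / 2) * ltilIntegrand P x) x := by
  have hcont := continuousOn_ltilIntegrand fun y hy => one_pos.trans_le (hP y hy.le)
  exact (intervalIntegral.integral_hasDerivAt_right
    (intervalIntegrable_ltilIntegrand hP0 hP hx.le)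
    (hcont.stronglyMeasurableAtFilter isOpen_Ioi x hx)
    (hcont.continuousAt (Ioi_mem_nhds hx))).const_mul _

lemma tendsto_Ltil_nhdsGT_zero (hP0 : P.eval 0 = 1) (hP : ∀ y, 0 ≤ y → 1 ≤ P.eval y) :
    Tendsto (Ltil P) (𝓝[>] 0) (𝓝 0) := by
  have hint : IntegrableOn (ltilIntegrand P) [[0, 1]] := by
    rw [uIcc_of_le zero_le_one, integrableOn_Icc_iff_integrableOn_Ioc,
      ← intervalIntegrable_iff_integrableOn_Ioc_of_le zero_le_one]
    exact intervalIntegrable_ltilIntegrand hP0 hP zero_le_one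
  have hcont := intervalIntegral.continuousOn_primitive_interval hint 0 left_mem_uIcc
  have hIcc : [[(0 : ℝ), 1]] ∈ 𝓝[>] (0 : ℝ) := by
    rw [uIcc_of_le zero_le_one]
    exact mem_of_superset (Ioc_mem_nhdsGT one_pos) Ioc_subset_Icc_self
  have h := (hcont.mono_of_mem_nhdsWithin hIcc).tendsto.const_mul (1 / 2 : ℝ)
  rwa [intervalIntegral.integral_same, mul_zero] at h

end Integrand

section Reciprocal

variable {P Q : ℝ[X]} {d : ℕ} {x : ℝ}

lemma eval_inv_of_reciprocal (hPQ : ∀ x, 0 < x → x ^ d * Q.eval x⁻¹ = P.eval x)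
    (hx : 0 < x) : Q.eval x⁻¹ = P.eval x / x ^ d := by
  rw [eq_div_iff (by positivity), mul_comm, hPQ x hx]

lemma logDeriv_eval_inv_of_reciprocal (hP : ∀ y, 0 < y → 0 < P.eval y)
    (hPQ : ∀ x, 0 < x → x ^ d * Q.eval x⁻¹ = P.eval x) (hx : 0 < x) :
    Q.derivative.eval x⁻¹ / Q.eval x⁻¹ =
      d * x - x ^ 2 * (P.derivative.eval x / P.eval x) := by
  have hQx : 0 < Q.eval x⁻¹ := by
    rw [eval_inv_of_reciprocal hPQ hx]; exact div_pos (hP x hx) (by positivity)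
  have hQ' : HasDerivAt (fun u => log (Q.eval u⁻¹))
      (Q.derivative.eval x⁻¹ * -(x ^ 2)⁻¹ / Q.eval x⁻¹) x :=
    ((Q.hasDerivAt x⁻¹).comp x (hasDerivAt_inv hx.ne')).log hQx.ne'
  have hP' : HasDerivAt (fun u => log (P.eval u) - d * log u)
      (P.derivative.eval x / P.eval x - d * x⁻¹) x :=
    ((P.hasDerivAt x).log (hP x hx).ne').sub ((hasDerivAt_log hx.ne').const_mul _)
  have hlog : (fun u => log (Q.eval u⁻¹)) =ᶠ[𝓝 x] fun u => log (P.eval u) - d * log u := by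
    filter_upwards [Ioi_mem_nhds hx] with u hu
    rw [eval_inv_of_reciprocal hPQ hu, log_div (hP u hu).ne' (pow_ne_zero _ (ne_of_gt hu)),
      log_pow]
  have h := hQ'.unique (hP'.congr_of_eventuallyEq hlog)
  calc _ = -(Q.derivative.eval x⁻¹ * -(x ^ 2)⁻¹ / Q.eval x⁻¹) * x ^ 2 := by field_simp
    _ = _ := by rw [h]; field_simp; ring

lemma ltilIntegrand_inv_of_reciprocal (hP : ∀ y, 0 < y → 0 < P.eval y)
    (hPQ : ∀ x, 0 < x → x ^ d * Q.eval x⁻¹ = P.eval x) (hx : 0 < x) :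
    ltilIntegrand Q x⁻¹ = x ^ 2 * ltilIntegrand P x := by
  have hlog : log (Q.eval x⁻¹) = log (P.eval x) - d * log x := by
    rw [eval_inv_of_reciprocal hPQ hx, log_div (hP x hx).ne' (pow_ne_zero _ hx.ne'), log_pow]
  simp only [ltilIntegrand, mul_div_assoc, hlog, log_inv,
    logDeriv_eval_inv_of_reciprocal hP hPQ hx]
  field_simp
  ring

lemma hasDerivAt_Ltil_add_Ltil_inv (hP0 : P.eval 0 = 1) (hP : ∀ y, 0 ≤ y → 1 ≤ P.eval y)
    (hQ0 : Q.eval 0 = 1) (hQ : ∀ y, 0 ≤ y → 1 ≤ Q.eval y)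
    (hPQ : ∀ x, 0 < x → x ^ d * Q.eval x⁻¹ = P.eval x) (hx : 0 < x) :
    HasDerivAt (fun u => Ltil P u + Ltil Q u⁻¹) 0 x := by
  have hQ' := (hasDerivAt_Ltil hQ0 hQ (inv_pos.mpr hx)).comp x (hasDerivAt_inv hx.ne')
  refine ((hasDerivAt_Ltil hP0 hP hx).add hQ').congr_deriv ?_
  rw [ltilIntegrand_inv_of_reciprocal (fun y hy => one_pos.trans_le (hP y hy.le)) hPQ hx]
  field_simp
  ring

theorem Ltil_duality_of_reciprocal (hP0 : P.eval 0 = 1) (hP : ∀ y, 0 ≤ y → 1 ≤ P.eval y)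
    (hQ0 : Q.eval 0 = 1) (hQ : ∀ y, 0 ≤ y → 1 ≤ Q.eval y)
    (hPQ : ∀ x, 0 < x → x ^ d * Q.eval x⁻¹ = P.eval x) :
    ∃ l, Tendsto (Ltil P) atTop (𝓝 l) ∧ Tendsto (Ltil Q) atTop (𝓝 l) ∧
      ∀ x, 0 < x → Ltil P x + Ltil Q x⁻¹ = l := by
  have hderiv := fun x (hx : x ∈ Ioi (0 : ℝ)) =>
    hasDerivAt_Ltil_add_Ltil_inv hP0 hP hQ0 hQ hPQ hx
  obtain ⟨l, hl⟩ := isOpen_Ioi.exists_is_const_of_deriv_eq_zero isPreconnected_Ioi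
    (fun x hx => (hderiv x hx).differentiableAt.differentiableWithinAt)
    (fun x hx => (hderiv x hx).deriv)
  have hinv {R : ℝ[X]} (hR0 : R.eval 0 = 1) (hR : ∀ y, 0 ≤ y → 1 ≤ R.eval y) :
      Tendsto (fun u => l - Ltil R u⁻¹) atTop (𝓝 l) := by
    simpa using tendsto_const_nhds.sub
      ((tendsto_Ltil_nhdsGT_zero hR0 hR).comp tendsto_inv_atTop_nhdsGT_zero)
  refine ⟨l, ?_, ?_, hl⟩
  · refine (hinv hQ0 hQ).congr' ?_
    filter_upwards [eventually_gt_atTop 0] with u hu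
    rw [← hl u hu, add_sub_cancel_right]
  · refine (hinv hP0 hP).congr' ?_
    filter_upwards [eventually_gt_atTop 0] with u hu
    rw [← hl u⁻¹ (inv_pos.mpr hu), inv_inv, add_sub_cancel_left]

end Reciprocal

section CoefficientSums

variable {w : ℕ → ℝ} {d : ℕ}

lemma sum_mul_zero_pow : ∑ s ∈ Finset.range (d + 1), w s * (0 : ℝ) ^ s = w 0 := by
  simp [Finset.sum_range_succ']

lemma one_le_sum_mul_pow (hw0 : w 0 = 1) (hw : ∀ s, s ≤ d → 0 ≤ w s) {y : ℝ} (hy : 0 ≤ y) :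
    1 ≤ ∑ s ∈ Finset.range (d + 1), w s * y ^ s := by
  rw [Finset.sum_range_succ', hw0, pow_zero, mul_one, le_add_iff_nonneg_left]
  exact Finset.sum_nonneg fun s hs =>
    mul_nonneg (hw _ (Finset.mem_range.mp hs)) (pow_nonneg hy _)

lemma pow_mul_sum_reflect_mul_inv_pow {x : ℝ} (hx : x ≠ 0) :
    x ^ d * ∑ s ∈ Finset.range (d + 1), w (d - s) * x⁻¹ ^ s =
      ∑ s ∈ Finset.range (d + 1), w s * x ^ s := by
  rw [Finset.mul_sum, ← Finset.sum_range_reflect _ (d + 1)]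
  refine Finset.sum_congr rfl fun s hs => ?_
  have hsd : s ≤ d := Nat.lt_succ_iff.mp (Finset.mem_range.mp hs)
  rw [Nat.add_sub_cancel, Nat.sub_sub_self hsd, inv_pow, pow_sub₀ x hx hsd]
  field_simp

end CoefficientSums

theorem Ltil_duality_general
    (d : ℕ) (z : ℕ → ℝ)
    (hz0 : z 0 = 1) (hzd : z d = 1) (hznn : ∀ s, s ≤ d → 0 ≤ z s)
    (P Pstar : Polynomial ℝ)
    (hP : P = ∑ s ∈ Finset.range (d + 1), Polynomial.C (z s) * Polynomial.X ^ s)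
    (hPstar : Pstar = ∑ s ∈ Finset.range (d + 1), Polynomial.C (z (d - s)) * Polynomial.X ^ s) :
    ∃ l : ℝ, Tendsto (Ltil P) atTop (nhds l) ∧ Tendsto (Ltil Pstar) atTop (nhds l) ∧
      ∀ x : ℝ, 0 < x → Ltil P x + Ltil Pstar (1 / x) = l := by
  have hPev (u : ℝ) : P.eval u = ∑ s ∈ Finset.range (d + 1), z s * u ^ s := by
    simp [hP, eval_finsetSum]
  have hPstarev (u : ℝ) : Pstar.eval u = ∑ s ∈ Finset.range (d + 1), z (d - s) * u ^ s := by
    simp [hPstar, eval_finsetSum]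
  have hznn' (s : ℕ) (_ : s ≤ d) : 0 ≤ z (d - s) := hznn _ (Nat.sub_le d s)
  obtain ⟨l, hPl, hPstarl, hl⟩ := Ltil_duality_of_reciprocal (d := d)
    (by rw [hPev, sum_mul_zero_pow, hz0])
    (fun y hy => hPev y ▸ one_le_sum_mul_pow hz0 hznn hy)
    (by rw [hPstarev, sum_mul_zero_pow, Nat.sub_zero, hzd])
    (fun y hy => hPstarev y ▸ one_le_sum_mul_pow (by rwa [Nat.sub_zero]) hznn' hy)
    (fun x hx => by rw [hPev, hPstarev, pow_mul_sum_reflect_mul_inv_pow hx.ne'])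
  exact ⟨l, hPl, hPstarl, fun x hx => one_div x ▸ hl x hx⟩

theorem Ltil_duality
    (d : ℕ) (hd : 1 ≤ d) (z : ℕ → ℝ)
    (hz0 : z 0 = 1) (hzd : z d = 1) (hznn : ∀ s, s ≤ d → 0 ≤ z s)
    (P Pstar : Polynomial ℝ)
    (hP : P = ∑ s ∈ Finset.range (d + 1), Polynomial.C (z s) * Polynomial.X ^ s)
    (hPstar : Pstar = ∑ s ∈ Finset.range (d + 1), Polynomial.C (z (d - s)) * Polynomial.X ^ s) :
    ∃ l : ℝ, Tendsto (Ltil P) atTop (nhds l) ∧ Tendsto (Ltil Pstar) atTop (nhds l) ∧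
      ∀ x : ℝ, 0 < x → Ltil P x + Ltil Pstar (1 / x) = l :=
  Ltil_duality_general d z hz0 hzd hznn P Pstar hP hPstar
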